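/- Let X and Y be normed linear spaces, f : X×Y → ℝ ∪ {+∞} with f(x̄,ȳ) = 0. Then the strict outer slope of f at (x̄,ȳ) is bounded above by the strict outer subdifferential slope: \overline{|∇f|}^>(x̄,ȳ) ≤ \overline{|∂f|}^>(x̄,ȳ). -/

import Mathlib

open Filter Metric Topology ENNReal

/-- The "positive part" of an extended real, as an element of `ℝ≥0∞`. -/
noncomputable def ePlus (a : EReal) : ℝ≥0∞ := if a = ⊤ then ⊤ else ENNReal.ofReal a.toReal

/-- The Fréchet subdifferential of `g` at `p` (empty when `g(p) = +∞`);
the defining liminf inequality is expressed in the equivalent ε-form. -/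
def frSubdiff {E : Type*} [NormedAddCommGroup E] [NormedSpace ℝ E]
    (g : E → EReal) (p : E) : Set (E →L[ℝ] ℝ) :=
  {l | g p ≠ ⊤ ∧ ∀ ε : ℝ, 0 < ε →
    ∀ᶠ q in 𝓝[≠] p, g p + ((l (q - p) - ε * ‖q - p‖ : ℝ) : EReal) ≤ g q}

variable {X Y : Type*} [NormedAddCommGroup X] [NormedSpace ℝ X]
  [NormedAddCommGroup Y] [NormedSpace ℝ Y]

/-- The ρ-slope of `f` at `(x,y)` (set to `+∞` when `f(x,y) = +∞`). -/
noncomputable def locSlopeRho (f : X × Y → EReal) (ρ : ℝ) (p : X × Y) : ℝ≥0∞ :=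
  if f p = ⊤ then ⊤ else
    Filter.limsup
      (fun q => ePlus (f p - f q) / ENNReal.ofReal (max ‖q.1 - p.1‖ (ρ * ‖q.2 - p.2‖)))
      (𝓝[≠] p)

/-- The subdifferential ρ-slope of `f` at `(x,y)`:
`|∂f|_ρ(x,y) := inf {‖x*‖ : (x*,y*) ∈ ∂f(x,y), ‖y*‖ < ρ}` (`inf ∅ = +∞`). -/
noncomputable def sdSlopeRho (f : X × Y → EReal) (ρ : ℝ) (p : X × Y) : ℝ≥0∞ :=
  ⨅ (l : X × Y →L[ℝ] ℝ)
    (_ : l ∈ frSubdiff f p ∧ ‖l.comp (ContinuousLinearMap.inr ℝ X Y)‖ < ρ),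
      (‖l.comp (ContinuousLinearMap.inl ℝ X Y)‖₊ : ℝ≥0∞)

/-- The strict outer slope
`\overline{|∇f|}^>(x̄,ȳ) := lim_{ρ↓0} inf {|∇f|_ρ(x,y) : ‖x−x̄‖ < ρ, 0 < f(x,y) < ρ}`
(the limit being a supremum by monotonicity; `inf ∅ = +∞`). -/
noncomputable def strictOuterSlope2 (f : X × Y → EReal) (x₀ : X) : ℝ≥0∞ :=
  ⨆ (ρ : ℝ) (_ : 0 < ρ),
    ⨅ (p : X × Y) (_ : ‖p.1 - x₀‖ < ρ ∧ 0 < f p ∧ f p < (ρ : EReal)), locSlopeRho f ρ p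

/-- The strict outer subdifferential slope
`\overline{|∂f|}^>(x̄,ȳ) := lim_{ρ↓0} inf {|∂f|_ρ(x,y) : ‖x−x̄‖ < ρ, 0 < f(x,y) < ρ}`. -/
noncomputable def strictOuterSdSlope2 (f : X × Y → EReal) (x₀ : X) : ℝ≥0∞ :=
  ⨆ (ρ : ℝ) (_ : 0 < ρ),
    ⨅ (p : X × Y) (_ : ‖p.1 - x₀‖ < ρ ∧ 0 < f p ∧ f p < (ρ : EReal)), sdSlopeRho f ρ p

/-! A Fréchet subgradient `(x*, y*)` of `f` at `(x, y)` bounds the decrease of `f` near `(x, y)`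
by the dual of the ρ-norm of `(x*, y*)`, which is at most `‖x*‖ + ‖y*‖ / ρ`; hence
`|∇f|_ρ(x, y) ≤ |∂f|_σ(x, y) + σ / ρ` for every `σ`. Taking `σ = min ρ (ρ ε)`, every point admissible
at level `σ` is admissible at level `ρ`, so the infimum defining the strict outer slope at level `ρ`
is at most the one defining the subdifferential slope at level `σ`, plus `ε`. -/

open ContinuousLinearMap

lemma ePlus_sub_le_ofReal_neg {a b : EReal} {r : ℝ} (ha : a ≠ ⊥) (h : a + r ≤ b) :
    ePlus (a - b) ≤ ENNReal.ofReal (-r) := by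
  induction a using EReal.rec <;> induction b using EReal.rec
  all_goals simp_all [ePlus, ← EReal.coe_sub, ← EReal.coe_add]
  exact ENNReal.ofReal_le_ofReal (by linarith)

def rhoNorm {E F : Type*} [Norm E] [Norm F] (ρ : ℝ) (d : E × F) : ℝ := max ‖d.1‖ (ρ * ‖d.2‖)

lemma norm_le_mul_rhoNorm {E F : Type*} [SeminormedAddCommGroup E] [SeminormedAddCommGroup F]
    {ρ : ℝ} (hρ : 0 < ρ) (d : E × F) : ‖d‖ ≤ max 1 ρ⁻¹ * rhoNorm ρ d := by
  have h0 : 0 ≤ rhoNorm ρ d := (norm_nonneg _).trans (le_max_left _ _)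
  rw [Prod.norm_def]
  refine max_le ?_ ?_
  · calc ‖d.1‖ ≤ 1 * rhoNorm ρ d := by rw [one_mul]; exact le_max_left _ _
      _ ≤ _ := by gcongr; exact le_max_left _ _
  · calc ‖d.2‖ = ρ⁻¹ * (ρ * ‖d.2‖) := by field_simp
      _ ≤ ρ⁻¹ * rhoNorm ρ d := by gcongr; exact le_max_right _ _
      _ ≤ _ := by gcongr; exact le_max_right _ _

lemma abs_apply_le_mul_rhoNorm {E F : Type*} [SeminormedAddCommGroup E] [NormedSpace ℝ E]
    [SeminormedAddCommGroup F] [NormedSpace ℝ F] {ρ : ℝ} (hρ : 0 < ρ)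
    (l : E × F →L[ℝ] ℝ) (d : E × F) :
    |l d| ≤ (‖l.comp (inl ℝ E F)‖ + ‖l.comp (inr ℝ E F)‖ / ρ) * rhoNorm ρ d := by
  have hd₁ : ‖d.1‖ ≤ rhoNorm ρ d := le_max_left _ _
  have hd₂ : ‖d.2‖ ≤ rhoNorm ρ d / ρ := by
    rw [le_div_iff₀ hρ, mul_comm]; exact le_max_right _ _
  calc |l d| = ‖l.comp (inl ℝ E F) d.1 + l.comp (inr ℝ E F) d.2‖ := by
        rw [comp_inl_add_comp_inr, Real.norm_eq_abs]
    _ ≤ ‖l.comp (inl ℝ E F)‖ * ‖d.1‖ + ‖l.comp (inr ℝ E F)‖ * ‖d.2‖ :=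
        (norm_add_le _ _).trans (add_le_add (le_opNorm _ _) (le_opNorm _ _))
    _ ≤ ‖l.comp (inl ℝ E F)‖ * rhoNorm ρ d + ‖l.comp (inr ℝ E F)‖ * (rhoNorm ρ d / ρ) := by
        gcongr
    _ = _ := by ring

lemma locSlopeRho_le_of_mem_frSubdiff {f : X × Y → EReal} {ρ : ℝ} (hρ : 0 < ρ) {p : X × Y}
    (hp : f p ≠ ⊥) {l : X × Y →L[ℝ] ℝ} (hl : l ∈ frSubdiff f p) :
    locSlopeRho f ρ p ≤ ENNReal.ofReal (‖l.comp (inl ℝ X Y)‖ + ‖l.comp (inr ℝ X Y)‖ / ρ) := by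
  set K := ‖l.comp (inl ℝ X Y)‖ + ‖l.comp (inr ℝ X Y)‖ / ρ
  set M := max 1 ρ⁻¹
  have hM : 0 < M := one_pos.trans_le (le_max_left _ _)
  rw [locSlopeRho, if_neg hl.1]
  refine ENNReal.le_of_forall_pos_le_add fun ε hε _ => ?_
  have hε' : 0 < (ε : ℝ) / M := div_pos hε hM
  calc _ ≤ ENNReal.ofReal (K + ε) := limsup_le_of_le (by isBoundedDefault) ?_
    _ ≤ ENNReal.ofReal K + ε := by rw [← ENNReal.ofReal_coe_nnreal]; exact ENNReal.ofReal_add_le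
  filter_upwards [hl.2 _ hε'] with q hq
  have hdecrease : -(l (q - p) - ε / M * ‖q - p‖) ≤ (K + ε) * rhoNorm ρ (q - p) := by
    have h₁ := (neg_le_abs (l (q - p))).trans (abs_apply_le_mul_rhoNorm hρ l (q - p))
    have h₂ : ε / M * ‖q - p‖ ≤ ε * rhoNorm ρ (q - p) := by
      calc ε / M * ‖q - p‖ ≤ ε / M * (M * rhoNorm ρ (q - p)) := by
            gcongr; exact norm_le_mul_rhoNorm hρ _
        _ = ε * rhoNorm ρ (q - p) := by field_simp
    linarith
  refine ENNReal.div_le_of_le_mul ?_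
  calc ePlus (f p - f q) ≤ ENNReal.ofReal (-(l (q - p) - ε / M * ‖q - p‖)) :=
        ePlus_sub_le_ofReal_neg hp hq
    _ ≤ ENNReal.ofReal ((K + ε) * rhoNorm ρ (q - p)) := ENNReal.ofReal_le_ofReal hdecrease
    _ = ENNReal.ofReal (K + ε) * ENNReal.ofReal (max ‖q.1 - p.1‖ (ρ * ‖q.2 - p.2‖)) :=
        ENNReal.ofReal_mul (by positivity)

lemma locSlopeRho_le_sdSlopeRho_add {f : X × Y → EReal} {ρ : ℝ} (hρ : 0 < ρ) {p : X × Y}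
    (hp : f p ≠ ⊥) (σ : ℝ) :
    locSlopeRho f ρ p ≤ sdSlopeRho f σ p + ENNReal.ofReal (σ / ρ) := by
  rw [sdSlopeRho, ENNReal.iInf_add]
  refine le_iInf fun l => ?_
  rw [ENNReal.iInf_add]
  refine le_iInf fun ⟨hl, hlσ⟩ => ?_
  calc locSlopeRho f ρ p
      ≤ ENNReal.ofReal (‖l.comp (inl ℝ X Y)‖ + ‖l.comp (inr ℝ X Y)‖ / ρ) :=
        locSlopeRho_le_of_mem_frSubdiff hρ hp hl
    _ ≤ ENNReal.ofReal ‖l.comp (inl ℝ X Y)‖ + ENNReal.ofReal (σ / ρ) :=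
        ENNReal.ofReal_add_le.trans (by gcongr)
    _ = _ := by rw [ofReal_norm, enorm_eq_nnnorm]

theorem strictOuterSlope2_le_strictOuterSdSlope2_general (f : X × Y → EReal) (x₀ : X) :
    strictOuterSlope2 f x₀ ≤ strictOuterSdSlope2 f x₀ := by
  refine iSup₂_le fun ρ hρ => ENNReal.le_of_forall_pos_le_add fun ε hε _ => ?_
  set σ := min ρ (ρ * ε)
  have hσ : 0 < σ := lt_min hρ (mul_pos hρ hε)
  have hσρ : ENNReal.ofReal (σ / ρ) ≤ ε := by
    rw [← ENNReal.ofReal_coe_nnreal]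
    exact ENNReal.ofReal_le_ofReal ((div_le_iff₀' hρ).mpr (min_le_right _ _))
  calc ⨅ (p : X × Y) (_ : ‖p.1 - x₀‖ < ρ ∧ 0 < f p ∧ f p < (ρ : EReal)), locSlopeRho f ρ p
      ≤ ⨅ (p : X × Y) (_ : ‖p.1 - x₀‖ < σ ∧ 0 < f p ∧ f p < (σ : EReal)),
          (sdSlopeRho f σ p + ε) := by
        refine le_iInf₂ fun p ⟨hx, hpos, hlt⟩ => ?_
        have hρp : ‖p.1 - x₀‖ < ρ ∧ 0 < f p ∧ f p < (ρ : EReal) :=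
          ⟨hx.trans_le (min_le_left _ _), hpos, hlt.trans_le (by exact_mod_cast min_le_left _ _)⟩
        calc _ ≤ locSlopeRho f ρ p := iInf₂_le p hρp
          _ ≤ sdSlopeRho f σ p + ENNReal.ofReal (σ / ρ) :=
            locSlopeRho_le_sdSlopeRho_add hρ hpos.ne_bot σ
          _ ≤ sdSlopeRho f σ p + ε := by gcongr
    _ = (⨅ (p : X × Y) (_ : ‖p.1 - x₀‖ < σ ∧ 0 < f p ∧ f p < (σ : EReal)),
          sdSlopeRho f σ p) + ε := by simp only [ENNReal.iInf_add]
    _ ≤ strictOuterSdSlope2 f x₀ + ε := by gcongr; exact le_iSup₂_of_le σ hσ le_rfl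

/-- `\overline{|∇f|}^>(x̄,ȳ) ≤ \overline{|∂f|}^>(x̄,ȳ)`. -/
theorem strictOuterSlope2_le_strictOuterSdSlope2 (f : X × Y → EReal) (x₀ : X) (y₀ : Y)
    (hbot : ∀ p, f p ≠ ⊥) (hf₀ : f (x₀, y₀) = 0) :
    strictOuterSlope2 f x₀ ≤ strictOuterSdSlope2 f x₀ :=
  strictOuterSlope2_le_strictOuterSdSlope2_general f x₀
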